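/- arXiv:1203.4828 — 3 statements merged into one kernel-verified Lean document; each statement's English description precedes it below -/
import Mathlib

section
/- Let η be a generalized fractal string (a locally finite measure on (0,∞) vanishing on (0, x₀) for some x₀ > 0) and define its spectral measure by ν(A) = ∑_{k=1}^∞ η(A/k) for bounded Borel sets A ⊆ (0,∞). Then for all s with Re(s) > max(1, D_η), the Mellin transforms satisfy ∫_0^∞ x^{-s} ν(dx) = (∫_0^∞ x^{-s} η(dx)) · ζ(s). -/
open MeasureTheory Complex

/-!
Since `ν = ∑ₖ (x ↦ (k+1) x)₊ η` and `((k+1) x)^{-s} = (k+1)^{-s} x^{-s}`, integrating `x^{-s}`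
against the `k`-th pushforward gives `(k+1)^{-s} ∫ x^{-s} dη`; summing over `k` produces the
Dirichlet series of `ζ(s)`, which converges absolutely for `Re s > 1`. When `x^{-s}` is not
`η`-integrable it is not `ν`-integrable either (`η ≤ ν`), so both sides vanish.
-/

theorem Complex.ofReal_mul_cpow_of_pos {a : ℝ} (ha : 0 < a) (z w : ℂ) :
    ((a : ℂ) * z) ^ w = (a : ℂ) ^ w * z ^ w := by
  have ha' : (a : ℂ) ≠ 0 := ofReal_ne_zero.mpr ha.ne'
  rcases eq_or_ne z 0 with rfl | hz
  · rcases eq_or_ne w 0 with rfl | hw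
    · simp
    · simp [zero_cpow hw]
  rw [cpow_def_of_ne_zero (mul_ne_zero ha' hz), log_ofReal_mul ha hz, ofReal_log ha.le,
    add_mul, exp_add, ← cpow_def_of_ne_zero ha', ← cpow_def_of_ne_zero hz]

section SumMap

variable {α 𝕜 : Type*} [MeasurableSpace α] [RCLike 𝕜] {μ : Measure α} {T : ℕ → α → α}
  {f : α → 𝕜} {c : ℕ → 𝕜}

theorem lintegral_enorm_sum_map_of_comp_eq_mul (hT : ∀ k, Measurable (T k)) (hf : Measurable f)
    (hfT : ∀ k x, f (T k x) = c k * f x) :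
    ∫⁻ x, ‖f x‖ₑ ∂Measure.sum (fun k => μ.map (T k)) = (∑' k, ‖c k‖ₑ) * ∫⁻ x, ‖f x‖ₑ ∂μ := by
  rw [lintegral_sum_measure, ← ENNReal.tsum_mul_right]
  refine tsum_congr fun k => ?_
  simp only [lintegral_map hf.enorm (hT k), hfT, enorm_mul]
  exact lintegral_const_mul _ hf.enorm

theorem integrable_sum_map_of_comp_eq_mul (hT : ∀ k, Measurable (T k)) (hf : Measurable f)
    (hfT : ∀ k x, f (T k x) = c k * f x) (hc : Summable fun k => ‖c k‖) (hfμ : Integrable f μ) :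
    Integrable f (Measure.sum fun k => μ.map (T k)) := by
  refine ⟨hf.aestronglyMeasurable, ?_⟩
  rw [HasFiniteIntegral, lintegral_enorm_sum_map_of_comp_eq_mul hT hf hfT]
  exact ENNReal.mul_lt_top (tsum_enorm_ne_top_iff_summable_norm.mpr hc).lt_top hfμ.2

theorem integral_sum_map_of_comp_eq_mul (hT : ∀ k, Measurable (T k)) (hf : Measurable f)
    (hfT : ∀ k x, f (T k x) = c k * f x) (hc : Summable fun k => ‖c k‖) (hfμ : Integrable f μ) :
    ∫ x, f x ∂Measure.sum (fun k => μ.map (T k)) = (∑' k, c k) * ∫ x, f x ∂μ := by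
  rw [integral_sum_measure (integrable_sum_map_of_comp_eq_mul hT hf hfT hc hfμ),
    ← tsum_mul_right]
  refine tsum_congr fun k => ?_
  simp only [integral_map (hT k).aemeasurable hf.aestronglyMeasurable, hfT]
  exact integral_const_mul _ _

end SumMap

theorem summable_norm_natCast_add_one_cpow_neg {s : ℂ} (hs : 1 < s.re) :
    Summable fun k : ℕ => ‖(((k : ℝ) + 1 : ℝ) : ℂ) ^ (-s)‖ := by
  have hpos (k : ℕ) : (0 : ℝ) < (k : ℝ) + 1 := by positivity
  simp only [norm_cpow_eq_rpow_re_of_pos (hpos _), neg_re]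
  exact_mod_cast (Real.summable_nat_rpow.mpr (neg_lt_neg hs)).comp_injective
    (add_left_injective 1)

theorem riemannZeta_eq_tsum_natCast_add_one_cpow_neg {s : ℂ} (hs : 1 < s.re) :
    riemannZeta s = ∑' k : ℕ, (((k : ℝ) + 1 : ℝ) : ℂ) ^ (-s) := by
  rw [zeta_eq_tsum_one_div_nat_add_one_cpow hs]
  refine tsum_congr fun k => ?_
  push_cast
  rw [cpow_neg, one_div]

theorem spectral_measure_mellin_transform_general
    (η ν : Measure ℝ)
    (hν : ∀ A : Set ℝ, MeasurableSet A →
      ν A = ∑' k : ℕ, η ((fun x : ℝ => ((k : ℝ) + 1) * x) ⁻¹' A))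
    (D : ℝ)
    (s : ℂ) (hs : max 1 D < s.re) :
    ∫ x : ℝ, ((x : ℂ) ^ (-s)) ∂ν = (∫ x : ℝ, ((x : ℂ) ^ (-s)) ∂η) * riemannZeta s := by
  have hs1 : 1 < s.re := (le_max_left _ _).trans_lt hs
  have hT (k : ℕ) : Measurable fun x : ℝ => ((k : ℝ) + 1) * x := measurable_const_mul _
  have hν_sum : ν = Measure.sum fun k : ℕ => η.map fun x : ℝ => ((k : ℝ) + 1) * x := by
    ext A hA
    rw [hν A hA, Measure.sum_apply _ hA]
    exact tsum_congr fun k => (Measure.map_apply (hT k) hA).symm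
  have hf : Measurable fun x : ℝ => (x : ℂ) ^ (-s) := by fun_prop
  have hfT (k : ℕ) (x : ℝ) : ((((k : ℝ) + 1) * x : ℝ) : ℂ) ^ (-s)
      = (((k : ℝ) + 1 : ℝ) : ℂ) ^ (-s) * (x : ℂ) ^ (-s) := by
    rw [ofReal_mul, ofReal_mul_cpow_of_pos (by positivity)]
  by_cases hfη : Integrable (fun x : ℝ => (x : ℂ) ^ (-s)) η
  · rw [hν_sum, integral_sum_map_of_comp_eq_mul hT hf hfT
      (summable_norm_natCast_add_one_cpow_neg hs1) hfη,
      riemannZeta_eq_tsum_natCast_add_one_cpow_neg hs1, mul_comm]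
  · have hην : η ≤ ν := by
      simpa [hν_sum] using Measure.le_sum (fun k : ℕ => η.map fun x : ℝ => ((k : ℝ) + 1) * x) 0
    rw [integral_undef hfη, integral_undef fun h => hfη (h.mono_measure hην), zero_mul]

/-- Let `η` be a generalized fractal string: a locally finite measure on `(0,∞)`
(vanishing on `(-∞,0]` and on `(0,x₀)` for some `x₀ > 0`), and let `ν` be its spectral
measure, `ν(A) = ∑_{k≥1} η(A/k)` (where `x ∈ A/k ↔ kx ∈ A`). Then for all `s` with
`Re s > max(1, D_η)`, where `D_η = inf{σ : ∫ x^{-σ} dη < ∞}`, one has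
`∫ x^{-s} dν = (∫ x^{-s} dη) · ζ(s)`. -/
theorem spectral_measure_mellin_transform
    (η ν : Measure ℝ) [IsLocallyFiniteMeasure η]
    (x₀ : ℝ) (hx₀ : 0 < x₀) (hzero : η (Set.Iic 0) = 0) (hvanish : η (Set.Ioo 0 x₀) = 0)
    (hν : ∀ A : Set ℝ, MeasurableSet A →
      ν A = ∑' k : ℕ, η ((fun x : ℝ => ((k : ℝ) + 1) * x) ⁻¹' A))
    (D : ℝ) (hD : D = sInf {σ : ℝ | Integrable (fun x : ℝ => x ^ (-σ)) η})
    (s : ℂ) (hs : max 1 D < s.re) :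
    ∫ x : ℝ, ((x : ℂ) ^ (-s)) ∂ν = (∫ x : ℝ, ((x : ℂ) ^ (-s)) ∂η) * riemannZeta s :=
  spectral_measure_mellin_transform_general η ν hν D s hs
end

section
/- For c > 1, the spectral operator on ℍ_c satisfies the operator-valued Euler product: ∑_{n=1}^∞ T_{log n} = ∏_{p prime} (Id − T_{log p})^{-1}, where the infinite product converges in operator norm and each factor (Id − T_{log p})^{-1} = ∑_{k=0}^∞ T_{k log p} is a bounded operator. -/
open MeasureTheory Complex Filter

/-- The weighted Hilbert space measure `μ_c(dt) = e^{-2ct} dt` on `ℝ`. -/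
noncomputable def weightedMeasure (c : ℝ) : Measure ℝ :=
  volume.withDensity fun t => ENNReal.ofReal (Real.exp (-2 * c * t))

/-- The weighted Hilbert space `ℍ_c = L²(ℝ, e^{-2ct}dt)`. -/
noncomputable abbrev Hc (c : ℝ) := Lp ℂ 2 (weightedMeasure c)

open scoped ENNReal Topology

/-!
Translation by `t` rescales `μ_c` by `e^{-2ct}`, so `‖T_t‖ ≤ e^{-ct}`, and `t ↦ T_t` is a
multiplicative one-parameter family. Hence `n ↦ T_{log n}` is completely multiplicative with
`‖T_{log n}‖ ≤ n^{-c}`, summable for `c > 1`. Its values commute, so they lie in a closed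
commutative subring (their double centralizer), where the Euler product for multiplicative
functions on complete normed commutative rings applies. The local factor at `p` is the geometric
series in `T_{log p}`, which inverts `1 - T_{log p}` on both sides.
-/

theorem tendsto_prod_primes_of_commute {R : Type*} [NormedRing R] [CompleteSpace R]
    {f : ℕ → R} {a : R} {B : ℕ → R} (hf₁ : f 1 = 1)
    (hmul : ∀ {m n : ℕ}, m.Coprime n → f (m * n) = f m * f n)
    (hcomm : ∀ m n, Commute (f m) (f n)) (hsum : Summable (‖f ·‖)) (hf₀ : f 0 = 0)
    (ha : HasSum f a) (hB : ∀ p : ℕ, p.Prime → HasSum (fun e => f (p ^ e)) (B p)) :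
    Tendsto (fun N : ℕ => (((List.range N).filter Nat.Prime).map B).prod) atTop (𝓝 a) := by
  set S : Subring R := Subring.centralizer (Set.range f).centralizer
  have hS : ∀ x y : S, x * y = y * x := fun x y => Subtype.ext <|
    Set.centralizer_centralizer_comm_of_comm (by rintro _ ⟨m, rfl⟩ _ ⟨n, rfl⟩; exact hcomm m n)
      _ x.2 _ y.2
  let _ : NormedCommRing S := { mul_comm := hS }
  have : CompleteSpace S := (Set.isClosed_centralizer _).completeSpace_coe
  let g : ℕ → S := fun n => ⟨f n, Set.subset_centralizer_centralizer ⟨n, rfl⟩⟩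
  have hg : Summable (‖g ·‖) := hsum
  have hasSum_coe {h : ℕ → S} (hh : Summable h) : HasSum (fun i => (h i : R)) (∑' i, h i : S) :=
    hh.hasSum.map S.subtype continuous_subtype_val
  have euler := (continuous_subtype_val.tendsto _).comp <|
    EulerProduct.eulerProduct (f := g) (Subtype.ext hf₁) (fun h => Subtype.ext (hmul h)) hg
      (Subtype.ext hf₀)
  rw [(hasSum_coe hg.of_norm).unique ha] at euler
  refine euler.congr fun N => ?_
  -- `Finset.prod` over `primesBelow N` unfolds to this list product.
  change ((((List.range N).filter Nat.Prime).map fun p => ∑' e, g (p ^ e)).prod : R) = _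
  rw [← S.coe_subtype, map_list_prod, List.map_map]
  refine congrArg List.prod (List.map_congr_left fun p hp => ?_)
  have hp : p.Prime := by simpa using (List.mem_filter.mp hp).2
  exact (hasSum_coe (hg.comp_injective (Nat.pow_right_injective hp.two_le)).of_norm).unique
    (hB p hp)

theorem map_natCast_mul_of_map_add {M : Type*} [Monoid M] {T : ℝ → M} (h0 : T 0 = 1)
    (hadd : ∀ s t, T (s + t) = T s * T t) (n : ℕ) (t : ℝ) : T (n * t) = T t ^ n := by
  induction n with
  | zero => simp [h0]
  | succ n ih => rw [Nat.cast_succ, add_one_mul, hadd, ih, pow_succ]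

section DirichletTerm

variable {R : Type*} [MonoidWithZero R] {T : ℝ → R}

variable (T) in
noncomputable def dirichletTerm (n : ℕ) : R := if n = 0 then 0 else T (Real.log n)

@[simp]
theorem dirichletTerm_zero : dirichletTerm T 0 = 0 := if_pos rfl

theorem dirichletTerm_of_ne_zero {n : ℕ} (hn : n ≠ 0) : dirichletTerm T n = T (Real.log n) :=
  if_neg hn

theorem dirichletTerm_one (h0 : T 0 = 1) : dirichletTerm T 1 = 1 := by
  simp [dirichletTerm_of_ne_zero one_ne_zero, h0]

theorem dirichletTerm_mul (hadd : ∀ s t, T (s + t) = T s * T t) (m n : ℕ) :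
    dirichletTerm T (m * n) = dirichletTerm T m * dirichletTerm T n := by
  rcases eq_or_ne m 0 with rfl | hm
  · simp
  rcases eq_or_ne n 0 with rfl | hn
  · simp
  rw [dirichletTerm_of_ne_zero (mul_ne_zero hm hn), dirichletTerm_of_ne_zero hm,
    dirichletTerm_of_ne_zero hn, Nat.cast_mul, Real.log_mul (by positivity) (by positivity), hadd]

theorem commute_dirichletTerm (hadd : ∀ s t, T (s + t) = T s * T t) (m n : ℕ) :
    Commute (dirichletTerm T m) (dirichletTerm T n) := by
  rw [Commute, SemiconjBy, ← dirichletTerm_mul hadd, ← dirichletTerm_mul hadd, mul_comm]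

theorem dirichletTerm_pow {p : ℕ} (hp : p ≠ 0) (k : ℕ) :
    dirichletTerm T (p ^ k) = T (k * Real.log p) := by
  rw [dirichletTerm_of_ne_zero (pow_ne_zero k hp), Nat.cast_pow, Real.log_pow]

end DirichletTerm

section NormedRing

variable {R : Type*} [NormedRing R] {T : ℝ → R}

theorem hasSum_dirichletTerm_iff {a : R} :
    HasSum (dirichletTerm T) a ↔ HasSum (fun n : ℕ => T (Real.log ((n : ℝ) + 1))) a := by
  rw [← hasSum_nat_add_iff' 1]
  simp [dirichletTerm_of_ne_zero]

theorem summable_norm_dirichletTerm {c : ℝ} (hc : 1 < c)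
    (hnorm : ∀ t, 0 ≤ t → ‖T t‖ ≤ Real.exp (-(c * t))) : Summable (‖dirichletTerm T ·‖) := by
  refine (Real.summable_nat_rpow.mpr (neg_lt_neg hc)).of_nonneg_of_le (fun _ => norm_nonneg _)
    fun n => ?_
  rcases eq_or_ne n 0 with rfl | hn
  · simp [Real.zero_rpow (by linarith : -c ≠ 0)]
  rw [dirichletTerm_of_ne_zero hn, Real.rpow_def_of_pos (by positivity), mul_comm, neg_mul]
  exact hnorm _ (Real.log_natCast_nonneg n)

end NormedRing

theorem lintegral_comp_sub_weightedMeasure (c t : ℝ) {g : ℝ → ℝ≥0∞} (hg : Measurable g) :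
    ∫⁻ u, g (u - t) ∂weightedMeasure c
      = ENNReal.ofReal (Real.exp (-2 * c * t)) * ∫⁻ u, g u ∂weightedMeasure c := by
  have hρ : Measurable fun u : ℝ => ENNReal.ofReal (Real.exp (-2 * c * u)) := by fun_prop
  have hg_sub : Measurable fun u => g (u - t) := hg.comp (measurable_sub_const t)
  rw [weightedMeasure, lintegral_withDensity_eq_lintegral_mul _ hρ hg_sub,
    lintegral_withDensity_eq_lintegral_mul _ hρ hg, ← lintegral_const_mul _ (hρ.mul hg),
    ← lintegral_add_right_eq_self _ t]
  congr 1 with u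
  simp only [Pi.mul_apply, add_sub_cancel_right, ← mul_assoc,
    ← ENNReal.ofReal_mul (Real.exp_pos _).le, ← Real.exp_add]
  ring_nf

theorem map_sub_weightedMeasure (c t : ℝ) :
    (weightedMeasure c).map (· - t)
      = ENNReal.ofReal (Real.exp (-2 * c * t)) • weightedMeasure c := by
  ext s hs
  rw [Measure.map_apply (measurable_sub_const t) hs, Measure.smul_apply, smul_eq_mul,
    ← lintegral_indicator_one hs, ← lintegral_indicator_one (measurable_sub_const t hs),
    ← lintegral_comp_sub_weightedMeasure c t (measurable_one.indicator hs)]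
  rfl

theorem quasiMeasurePreserving_sub_weightedMeasure (c t : ℝ) :
    Measure.QuasiMeasurePreserving (· - t) (weightedMeasure c) (weightedMeasure c) :=
  ⟨measurable_sub_const t, map_sub_weightedMeasure c t ▸ Measure.smul_absolutelyContinuous⟩

theorem eLpNorm_comp_sub_weightedMeasure {c : ℝ} {f : ℝ → ℂ}
    (hf : AEStronglyMeasurable f (weightedMeasure c)) (t : ℝ) :
    eLpNorm (fun u => f (u - t)) 2 (weightedMeasure c)
      = ENNReal.ofReal (Real.exp (-(c * t))) * eLpNorm f 2 (weightedMeasure c) := by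
  rw [← Function.comp_def, ← eLpNorm_map_measure _ (measurable_sub_const t).aemeasurable,
    map_sub_weightedMeasure, eLpNorm_smul_measure_of_ne_top ENNReal.ofNat_ne_top, smul_eq_mul]
  · congr 1
    rw [ENNReal.ofReal_rpow_of_pos (Real.exp_pos _), ← Real.exp_mul]
    congr 2
    norm_num
    ring
  · rw [map_sub_weightedMeasure]
    exact hf.smul_measure _

def IsTranslation {c : ℝ} (t : ℝ) (A : Hc c →L[ℂ] Hc c) : Prop :=
  ∀ f : Hc c, ⇑(A f) =ᵐ[weightedMeasure c] fun u => f (u - t)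

namespace IsTranslation

variable {c s t : ℝ} {A A' : Hc c →L[ℂ] Hc c}

theorem unique (hA : IsTranslation t A) (hA' : IsTranslation t A') : A = A' :=
  ContinuousLinearMap.ext fun f => Lp.ext ((hA f).trans (hA' f).symm)

theorem one : IsTranslation (c := c) 0 1 := fun f => by simp

theorem mul (hA : IsTranslation s A) (hA' : IsTranslation t A') :
    IsTranslation (s + t) (A * A') := fun f =>
  (hA (A' f)).trans <| ((quasiMeasurePreserving_sub_weightedMeasure c s).ae_eq_comp
    (hA' f)).trans <| .of_eq <| by simp only [Function.comp_def, sub_sub]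

theorem norm_le (hA : IsTranslation t A) : ‖A‖ ≤ Real.exp (-(c * t)) :=
  A.opNorm_le_bound (Real.exp_pos _).le fun f => by
    rw [Lp.norm_def, Lp.norm_def, eLpNorm_congr_ae (hA f),
      eLpNorm_comp_sub_weightedMeasure (Lp.aestronglyMeasurable f), ENNReal.toReal_mul,
      ENNReal.toReal_ofReal (Real.exp_pos _).le]

end IsTranslation

/-- For `c > 1`, the spectral operator on `ℍ_c` satisfies the operator-valued Euler product
`∑_{n≥1} T_{log n} = ∏_{p prime} (Id − T_{log p})⁻¹`, the product being taken over the primes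
in increasing order and converging in operator norm; each factor
`(Id − T_{log p})⁻¹ = ∑_{k≥0} T_{k log p}` is a bounded operator, a two-sided inverse of
`Id − T_{log p}`.  Here `T_t` is translation by `t`: `(T_t f)(u) = f(u − t)`. -/
theorem spectral_operator_euler_product (c : ℝ) (hc : 1 < c)
    (T : ℝ → (Hc c →L[ℂ] Hc c))
    (hT : ∀ (t : ℝ) (f : Hc c),
      (⇑(T t f) : ℝ → ℂ) =ᵐ[weightedMeasure c] fun u => f (u - t))
    (a : Hc c →L[ℂ] Hc c)
    (ha : HasSum (fun n : ℕ => T (Real.log ((n : ℝ) + 1))) a)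
    (B : ℕ → (Hc c →L[ℂ] Hc c))
    (hB : ∀ p : ℕ, p.Prime → HasSum (fun k : ℕ => T ((k : ℝ) * Real.log p)) (B p)) :
    (∀ p : ℕ, p.Prime →
      B p * (1 - T (Real.log p)) = 1 ∧ (1 - T (Real.log p)) * B p = 1) ∧
    Tendsto (fun N : ℕ => (((List.range N).filter Nat.Prime).map B).prod)
      atTop (nhds a) := by
  have hT : ∀ t, IsTranslation t (T t) := hT
  have h0 : T 0 = 1 := (hT 0).unique IsTranslation.one
  have hadd : ∀ s t, T (s + t) = T s * T t := fun s t => (hT (s + t)).unique ((hT s).mul (hT t))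
  refine ⟨fun p hp => ?_, ?_⟩
  · have hgeom : HasSum (fun k : ℕ => T (Real.log p) ^ k) (B p) := by
      simpa only [map_natCast_mul_of_map_add h0 hadd] using hB p hp
    rw [← hgeom.tsum_eq]
    exact ⟨hgeom.summable.tsum_pow_mul_one_sub, hgeom.summable.one_sub_mul_tsum_pow⟩
  · exact tendsto_prod_primes_of_commute (dirichletTerm_one h0)
      (fun _ => dirichletTerm_mul hadd _ _) (commute_dirichletTerm hadd)
      (summable_norm_dirichletTerm hc fun t _ => (hT t).norm_le) dirichletTerm_zero
      (hasSum_dirichletTerm_iff.mpr ha)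
      (fun p hp => by simpa only [dirichletTerm_pow hp.ne_zero] using hB p hp)
end

section
/- Let c ∈ ℝ, f ∈ L²(ℝ, e^{-2ct}dt), and suppose f is absolutely continuous with f' ∈ L²(ℝ, e^{-2ct}dt). Then |f(t)| e^{-ct} → 0 as t → +∞ and |f(t)| e^{-ct} → 0 as t → −∞. -/
/-!
Writing `f t = f s - ∫_t^s g` and averaging over `s ∈ (t, t + 1]` gives
`‖f t‖ ≤ ∫_t^{t+1} (‖f‖ + ‖g‖)`. On that unit interval `e^{-ct} ≤ e^{|c|} e^{-cu}`, so with
`K = (‖f‖ + ‖g‖) e^{-cu}`, which lies in `L²(ℝ)` because `f, g ∈ ℍ_c`, Cauchy–Schwarz yields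
`‖f t‖ e^{-ct} ≤ e^{|c|} (∫_t^{t+1} K²)^{1/2}`. The right-hand side tends to `0` as `|t| → ∞`
by dominated convergence.
-/

open MeasureTheory Complex Filter

open Set Topology

lemma integral_le_sqrt_integral_sq {Ω : Type*} [MeasurableSpace Ω] {μ : Measure Ω}
    [IsProbabilityMeasure μ] {X : Ω → ℝ} (hX : MemLp X 2 μ) :
    ∫ ω, X ω ∂μ ≤ √(∫ ω, X ω ^ 2 ∂μ) := by
  have hvar := ProbabilityTheory.variance_nonneg X μ
  rw [ProbabilityTheory.variance_eq_sub hX, sub_nonneg] at hvar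
  exact (le_abs_self _).trans (Real.abs_le_sqrt hvar)

instance isProbabilityMeasure_restrict_Ioc_add_one (t : ℝ) :
    IsProbabilityMeasure (volume.restrict (Ioc t (t + 1))) :=
  ⟨by simp⟩

lemma tendsto_setIntegral_Ioc_add_one_cocompact {E : Type*} [NormedAddCommGroup E]
    [NormedSpace ℝ E] {φ : ℝ → E} (hφ : Integrable φ) :
    Tendsto (fun t => ∫ u in Ioc t (t + 1), φ u) (cocompact ℝ) (𝓝 0) := by
  have : (cocompact ℝ).IsCountablyGenerated := by
    rw [cocompact_eq_atBot_atTop]; infer_instance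
  simp_rw [← integral_indicator measurableSet_Ioc]
  rw [← integral_zero ℝ E]
  refine tendsto_integral_filter_of_dominated_convergence (‖φ ·‖)
    (.of_forall fun t => hφ.aestronglyMeasurable.indicator measurableSet_Ioc)
    (.of_forall fun t => ae_of_all _ fun u => norm_indicator_le_norm_self _ _) hφ.norm
    (ae_of_all _ fun u => tendsto_const_nhds.congr' ?_)
  refine mem_cocompact.2 ⟨Icc (u - 1) u, isCompact_Icc, fun t ht => ?_⟩
  refine (indicator_of_notMem (fun hu => ht ⟨?_, hu.1.le⟩) _).symm
  linarith [hu.2]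

section AbsolutelyContinuous

variable {E : Type*} [NormedAddCommGroup E] [NormedSpace ℝ E] {f g : ℝ → E}

lemma continuous_of_eq_add_integral (hg : LocallyIntegrable g)
    (hac : ∀ s t : ℝ, f t = f s + ∫ u in s..t, g u) : Continuous f := by
  rw [funext (hac 0)]
  exact continuous_const.add <| intervalIntegral.continuous_primitive
    (fun a b => (hg.integrableOn_isCompact isCompact_uIcc).intervalIntegrable) 0

lemma norm_le_setIntegral_Ioc_of_eq_add_integral (hg : LocallyIntegrable g)
    (hac : ∀ s t : ℝ, f t = f s + ∫ u in s..t, g u) (t : ℝ) :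
    ‖f t‖ ≤ ∫ u in Ioc t (t + 1), (‖f u‖ + ‖g u‖) := by
  set I := Ioc t (t + 1)
  have hfI : IntegrableOn (‖f ·‖) I :=
    ((continuous_of_eq_add_integral hg hac).norm.integrableOn_Icc).mono_set Ioc_subset_Icc_self
  have hgI : IntegrableOn (‖g ·‖) I :=
    ((hg.integrableOn_isCompact isCompact_Icc).mono_set Ioc_subset_Icc_self).norm
  have hpoint : ∀ s ∈ I, ‖f t‖ ≤ ‖f s‖ + ∫ u in I, ‖g u‖ := by
    intro s hs
    calc ‖f t‖ = ‖f s - ∫ u in t..s, g u‖ := by rw [hac t s, add_sub_cancel_right]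
      _ ≤ ‖f s‖ + ‖∫ u in t..s, g u‖ := norm_sub_le _ _
      _ ≤ ‖f s‖ + ∫ u in Ioc t s, ‖g u‖ := by
        rw [intervalIntegral.integral_of_le hs.1.le]
        gcongr
        exact norm_integral_le_integral_norm _
      _ ≤ ‖f s‖ + ∫ u in I, ‖g u‖ := by
        grw [setIntegral_mono_set hgI (ae_of_all _ fun u => norm_nonneg _)
          (Ioc_subset_Ioc_right hs.2).eventuallyLE]
  calc ‖f t‖ = ∫ _ in I, ‖f t‖ := by simp [I]
    _ ≤ ∫ s in I, (‖f s‖ + ∫ u in I, ‖g u‖) :=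
      setIntegral_mono_on (integrable_const _) (hfI.add (integrable_const _)) measurableSet_Ioc
        hpoint
    _ = ∫ u in I, (‖f u‖ + ‖g u‖) := by
      rw [integral_add hfI (integrable_const _), integral_add hfI hgI]
      simp [I]

lemma norm_mul_exp_le_setIntegral_Ioc_of_eq_add_integral (hg : LocallyIntegrable g)
    (hac : ∀ s t : ℝ, f t = f s + ∫ u in s..t, g u) (c t : ℝ) :
    ‖f t‖ * Real.exp (-c * t) ≤
      Real.exp |c| *
        ∫ u in Ioc t (t + 1), (‖f u‖ * Real.exp (-c * u) + ‖g u‖ * Real.exp (-c * u)) := by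
  set I := Ioc t (t + 1)
  have hk : IntegrableOn (fun u => ‖f u‖ + ‖g u‖) (Icc t (t + 1)) :=
    (continuous_of_eq_add_integral hg hac).norm.integrableOn_Icc.add
      (hg.integrableOn_isCompact isCompact_Icc).norm
  have hI {h : ℝ → ℝ} (hh : IntegrableOn h (Icc t (t + 1))) : IntegrableOn h I :=
    hh.mono_set Ioc_subset_Icc_self
  have hweight : ∀ u ∈ I, Real.exp (-c * t) ≤ Real.exp |c| * Real.exp (-c * u) := by
    intro u hu
    rw [← Real.exp_add]
    gcongr
    nlinarith [hu.1, hu.2, le_abs_self c, neg_abs_le c]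
  calc ‖f t‖ * Real.exp (-c * t)
      ≤ (∫ u in I, (‖f u‖ + ‖g u‖)) * Real.exp (-c * t) := by
        gcongr
        exact norm_le_setIntegral_Ioc_of_eq_add_integral hg hac t
    _ = ∫ u in I, (‖f u‖ + ‖g u‖) * Real.exp (-c * t) := (integral_mul_const _ _).symm
    _ ≤ ∫ u in I, Real.exp |c| * ((‖f u‖ + ‖g u‖) * Real.exp (-c * u)) := by
        refine setIntegral_mono_on ((hI hk).mul_const _) ?_ measurableSet_Ioc fun u hu => ?_
        · exact (hI (hk.mul_continuousOn (by fun_prop) isCompact_Icc)).const_mul _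
        · rw [mul_left_comm]
          gcongr
          exact hweight u hu
    _ = _ := by
        rw [integral_const_mul]
        simp_rw [add_mul]

end AbsolutelyContinuous

lemma volume_absolutelyContinuous_weightedMeasure (c : ℝ) : volume ≪ weightedMeasure c :=
  withDensity_absolutelyContinuous' (by fun_prop) (ae_of_all _ fun t => by positivity)

lemma memLp_norm_mul_exp_of_memLp_weightedMeasure {E : Type*} [NormedAddCommGroup E] {c : ℝ}
    {f : ℝ → E} (hf : MemLp f 2 (weightedMeasure c)) :
    MemLp (fun t => ‖f t‖ * Real.exp (-c * t)) 2 := by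
  have hfm := hf.1.mono_ac (volume_absolutelyContinuous_weightedMeasure c)
  refine (memLp_two_iff_integrable_sq (hfm.norm.mul (by fun_prop))).2 ?_
  have hsq := hf.integrable_norm_pow two_ne_zero
  rw [weightedMeasure, integrable_withDensity_iff_integrable_smul' (by fun_prop)
    (ae_of_all _ fun _ => ENNReal.ofReal_lt_top)] at hsq
  refine hsq.congr (ae_of_all _ fun t => ?_)
  dsimp only [Pi.mul_apply]
  rw [ENNReal.toReal_ofReal (Real.exp_nonneg _), smul_eq_mul, mul_pow, ← Real.exp_nat_mul]
  ring_nf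

lemma locallyIntegrable_of_memLp_weightedMeasure {E : Type*} [NormedAddCommGroup E] {c : ℝ}
    {f : ℝ → E} (hf : MemLp f 2 (weightedMeasure c)) : LocallyIntegrable f := by
  have hF := (memLp_norm_mul_exp_of_memLp_weightedMeasure hf).locallyIntegrable one_le_two
  refine (hF.mul_continuous (g := fun t => Real.exp (c * t)) (by fun_prop)).mono
    (hf.1.mono_ac (volume_absolutelyContinuous_weightedMeasure c)) (ae_of_all _ fun t => ?_)
  rw [mul_assoc, ← Real.exp_add, neg_mul, neg_add_cancel, Real.exp_zero, mul_one, norm_norm]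

/-- Natural boundary conditions on the domain of the infinitesimal shift: if
`f ∈ L²(ℝ, e^{-2ct}dt)` is absolutely continuous (with a.e. derivative `g`, so that
`f(t) = f(s) + ∫_s^t g(u) du`) and `g ∈ L²(ℝ, e^{-2ct}dt)`, then `|f(t)| e^{-ct} → 0`
as `t → +∞` and `|f(t)| e^{-ct} → 0` as `t → −∞`. -/
theorem boundary_conditions_weighted_sobolev (c : ℝ) (f g : ℝ → ℂ)
    (hf : MemLp f 2 (weightedMeasure c))
    (hg : MemLp g 2 (weightedMeasure c))
    (hac : ∀ s t : ℝ, f t = f s + ∫ u in s..t, g u) :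
    Tendsto (fun t : ℝ => ‖f t‖ * Real.exp (-c * t)) atTop (nhds 0) ∧
    Tendsto (fun t : ℝ => ‖f t‖ * Real.exp (-c * t)) atBot (nhds 0) := by
  have hK : MemLp (fun u => ‖f u‖ * Real.exp (-c * u) + ‖g u‖ * Real.exp (-c * u)) 2 :=
    (memLp_norm_mul_exp_of_memLp_weightedMeasure hf).add
      (memLp_norm_mul_exp_of_memLp_weightedMeasure hg)
  have hbound : ∀ t, ‖f t‖ * Real.exp (-c * t) ≤ Real.exp |c| *
      √(∫ u in Ioc t (t + 1), (‖f u‖ * Real.exp (-c * u) + ‖g u‖ * Real.exp (-c * u)) ^ 2) :=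
    fun t => (norm_mul_exp_le_setIntegral_Ioc_of_eq_add_integral
      (locallyIntegrable_of_memLp_weightedMeasure hg) hac c t).trans <|
        mul_le_mul_of_nonneg_left (integral_le_sqrt_integral_sq (hK.restrict _)) (Real.exp_nonneg _)
  have hlim := ((tendsto_setIntegral_Ioc_add_one_cocompact hK.integrable_sq).sqrt).const_mul
    (Real.exp |c|)
  rw [Real.sqrt_zero, mul_zero] at hlim
  have hdecay := squeeze_zero (fun t => by positivity) hbound hlim
  exact ⟨hdecay.mono_left atTop_le_cocompact, hdecay.mono_left atBot_le_cocompact⟩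
end
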